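/- arXiv:1905.02694 — 3 statements merged into one kernel-verified Lean document; each statement's English description precedes it below -/
import Mathlib

section
/- Every symplectic matrix M ∈ Sp_{2n}(ℂ) whose entries are close enough to the identity matrix (in particular so that all pivots arising in Gaussian elimination are nonzero) can be written as a product of at most N(n) elementary symplectic matrices, where N(n) depends only on n. -/
open Matrix

/-- Index type for `2n × 2n` block matrices. -/
abbrev Idx (n : ℕ) := Fin n ⊕ Fin n

/-- The standard symplectic form matrix `J = [[0, I], [-I, 0]]`. -/
def Jmat (R : Type*) [CommRing R] (n : ℕ) : Matrix (Idx n) (Idx n) R :=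
  Matrix.fromBlocks 0 1 (-1) 0

/-- A `2n × 2n` matrix is symplectic if `Mᵀ J M = J`. -/
def IsSymplectic {R : Type*} [CommRing R] {n : ℕ} (M : Matrix (Idx n) (Idx n) R) : Prop :=
  Mᵀ * Jmat R n * M = Jmat R n

/-- The symmetric `n × n` matrix with `a` in entries `(i,j)` and `(j,i)` and zeros elsewhere. -/
def Smat {R : Type*} [CommRing R] {n : ℕ} (i j : Fin n) (a : R) : Matrix (Fin n) (Fin n) R :=
  Matrix.of fun k l => if (k = i ∧ l = j) ∨ (k = j ∧ l = i) then a else 0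

/-- The elementary symplectic matrix `E_{ij}(a) = [[I, S],[0, I]]`. -/
def Emat {R : Type*} [CommRing R] {n : ℕ} (i j : Fin n) (a : R) : Matrix (Idx n) (Idx n) R :=
  Matrix.fromBlocks 1 (Smat i j a) 0 1

/-- The elementary symplectic matrix `F_{ij}(a) = [[I, 0],[S, I]]`. -/
def Fmat {R : Type*} [CommRing R] {n : ℕ} (i j : Fin n) (a : R) : Matrix (Idx n) (Idx n) R :=
  Matrix.fromBlocks 1 0 (Smat i j a) 1

/-- The matrix `K_{ij}(a) = [[I + a e_{ij}, 0],[0, I - a e_{ji}]]` for `i ≠ j`. -/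
def Kmat {R : Type*} [CommRing R] {n : ℕ} (i j : Fin n) (a : R) :
    Matrix (Idx n) (Idx n) R :=
  Matrix.fromBlocks (1 + Matrix.single i j a) 0 0 (1 - Matrix.single j i a)

/-- An elementary symplectic matrix: `[[I,B],[0,I]]` or `[[I,0],[C,I]]` with symmetric block. -/
def IsElemSymp {R : Type*} [CommRing R] {n : ℕ} (M : Matrix (Idx n) (Idx n) R) : Prop :=
  ∃ B : Matrix (Fin n) (Fin n) R, Bᵀ = B ∧
    (M = Matrix.fromBlocks 1 B 0 1 ∨ M = Matrix.fromBlocks 1 0 B 1)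


/-!
Write `M = [[A, B], [C, D]]`. When `A` is invertible, the symplectic relations make `Aᵀ C` and
`A⁻¹ B` symmetric and give `M = diag(A, A⁻ᵀ) · [[I, 0], [Aᵀ C, I]] · [[I, A⁻¹ B], [0, I]]`.
The map `A ↦ diag(A, A⁻ᵀ)` is multiplicative. For `A` near `I`, Gaussian elimination without
pivoting writes `A = (I + c₁ e₁ᵀ) ⋯ (I + cₙ eₙᵀ) · diag(d)` with `eₖᵀ cₖ = 0` and all `dᵢ ≠ 0`,
each elimination step at most quadrupling the entrywise distance to `I`. Both
`diag(I + c eₖᵀ, I - eₖ cᵀ)` and `diag(S, S⁻¹)` with `S` symmetric are products of four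
elementary symplectic matrices, so `M` is a product of `4n + 6` of them.
-/

variable {n : ℕ}

section ElementaryProducts

variable {R : Type*} [CommRing R]

def IsElemSympProd (N : ℕ) (M : Matrix (Idx n) (Idx n) R) : Prop :=
  ∃ L : List (Matrix (Idx n) (Idx n) R), L.length ≤ N ∧ (∀ E ∈ L, IsElemSymp E) ∧ M = L.prod

theorem isElemSympProd_one : IsElemSympProd 0 (1 : Matrix (Idx n) (Idx n) R) :=
  ⟨[], le_rfl, by simp, by simp⟩

theorem IsElemSymp.isElemSympProd {M : Matrix (Idx n) (Idx n) R} (h : IsElemSymp M) :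
    IsElemSympProd 1 M :=
  ⟨[M], le_rfl, by simpa using h, by simp⟩

theorem IsElemSympProd.mul {N N' : ℕ} {M M' : Matrix (Idx n) (Idx n) R}
    (h : IsElemSympProd N M) (h' : IsElemSympProd N' M') : IsElemSympProd (N + N') (M * M') := by
  obtain ⟨L, hL, hE, rfl⟩ := h
  obtain ⟨L', hL', hE', rfl⟩ := h'
  refine ⟨L ++ L', by simp; omega, fun E hE'' => ?_, by simp⟩
  rcases List.mem_append.mp hE'' with h | h
  exacts [hE E h, hE' E h]

theorem isElemSympProd_fromBlocks_one_zero {B : Matrix (Fin n) (Fin n) R} (hB : Bᵀ = B) :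
    IsElemSympProd 1 (fromBlocks 1 B 0 1) :=
  IsElemSymp.isElemSympProd ⟨B, hB, .inl rfl⟩

theorem isElemSympProd_fromBlocks_zero_one {B : Matrix (Fin n) (Fin n) R} (hB : Bᵀ = B) :
    IsElemSympProd 1 (fromBlocks 1 0 B 1) :=
  IsElemSymp.isElemSympProd ⟨B, hB, .inr rfl⟩

end ElementaryProducts

section SymplecticDiag

variable {R : Type*} [CommRing R]

noncomputable def symplecticDiag (A : Matrix (Fin n) (Fin n) R) : Matrix (Idx n) (Idx n) R :=
  fromBlocks A 0 0 A⁻¹ᵀ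

theorem symplecticDiag_mul (A B : Matrix (Fin n) (Fin n) R) :
    symplecticDiag (A * B) = symplecticDiag A * symplecticDiag B := by
  simp [symplecticDiag, fromBlocks_multiply, Matrix.mul_inv_rev, transpose_mul]

theorem isElemSympProd_symplecticDiag_of_symm {S : Matrix (Fin n) (Fin n) R} (hS : Sᵀ = S)
    (hdet : IsUnit S.det) : IsElemSympProd 4 (symplecticDiag S) := by
  have hSinv : S⁻¹ᵀ = S⁻¹ := by rw [transpose_nonsing_inv, hS]
  have hfac : symplecticDiag S = fromBlocks 1 1 0 1 * fromBlocks 1 0 (S - 1) 1 *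
      fromBlocks 1 (-S⁻¹) 0 1 * fromBlocks 1 0 (S - S * S) 1 := by
    simp only [symplecticDiag, hSinv, fromBlocks_multiply, fromBlocks_inj]
    simp [Matrix.mul_sub, Matrix.sub_mul, mul_nonsing_inv S hdet, nonsing_inv_mul S hdet,
      ← Matrix.mul_assoc]
  rw [hfac]
  refine (((isElemSympProd_fromBlocks_one_zero transpose_one).mul
    (isElemSympProd_fromBlocks_zero_one ?_)).mul (isElemSympProd_fromBlocks_one_zero ?_)).mul
    (isElemSympProd_fromBlocks_zero_one ?_)
  · rw [transpose_sub, hS, transpose_one]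
  · rw [transpose_neg, hSinv]
  · rw [transpose_sub, transpose_mul, hS]

theorem isElemSympProd_symplecticDiag_one_add_vecMulVec {v : Fin n → R} {k : Fin n}
    (hv : v k = 0) : IsElemSympProd 4 (symplecticDiag (1 + vecMulVec v (Pi.single k 1))) := by
  set e : Fin n → R := Pi.single k 1
  have hev : e ⬝ᵥ v = 0 := by simp [e, single_dotProduct, hv]
  have hve : v ⬝ᵥ e = 0 := by simp [e, dotProduct_single, hv]
  have hee : e ⬝ᵥ e = 1 := by simp [e, dotProduct_single]
  have hinv : (1 + vecMulVec v e)⁻¹ = 1 - vecMulVec v e := by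
    apply inv_eq_right_inv
    simp [Matrix.add_mul, Matrix.mul_sub, vecMulVec_mul_vecMulVec, hev]
  -- With `Z = v vᵀ - v eᵀ - e vᵀ` one has `eᵀ Z e = 0`, so conjugating `fromBlocks 1 Z 0 1` by
  -- `fromBlocks 1 0 (e eᵀ) 1` already gives the diagonal blocks `1 + v eᵀ` and `1 - e vᵀ`;
  -- the leading factor clears the upper-right block.
  have hfac : symplecticDiag (1 + vecMulVec v e) =
      fromBlocks 1 (vecMulVec v e + vecMulVec e v) 0 1 * fromBlocks 1 0 (vecMulVec e e) 1 *
      fromBlocks 1 (vecMulVec v v - vecMulVec v e - vecMulVec e v) 0 1 *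
      fromBlocks 1 0 (-vecMulVec e e) 1 := by
    simp only [symplecticDiag, hinv, fromBlocks_multiply, fromBlocks_inj]
    simp only [mul_one, Matrix.add_mul, vecMulVec_mul_vecMulVec, hee, one_smul, hve, zero_smul,
      vecMulVec_zero, add_zero, mul_zero, zero_add, Matrix.mul_sub, one_mul, hev, mul_neg,
      Matrix.sub_mul, zero_sub, sub_zero, neg_add_cancel, neg_zero, sub_self, neg_mul,
      add_neg_cancel, transpose_sub, transpose_one, transpose_vecMulVec, true_and]
    constructor <;> abel
  rw [hfac]
  refine (((isElemSympProd_fromBlocks_one_zero ?_).mul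
    (isElemSympProd_fromBlocks_zero_one (transpose_vecMulVec e e))).mul
    (isElemSympProd_fromBlocks_one_zero ?_)).mul (isElemSympProd_fromBlocks_zero_one ?_)
  · rw [transpose_add, transpose_vecMulVec, transpose_vecMulVec, add_comm]
  · rw [transpose_sub, transpose_sub, transpose_vecMulVec, transpose_vecMulVec,
      transpose_vecMulVec, sub_sub, sub_sub, add_comm (vecMulVec e v)]
  · rw [transpose_neg, transpose_vecMulVec]

end SymplecticDiag

section Symplectic

variable {R : Type*} [CommRing R]

theorem isSymplectic_iff_mem_symplecticGroup {M : Matrix (Idx n) (Idx n) R} :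
    IsSymplectic M ↔ M ∈ symplecticGroup (Fin n) R := by
  have hJ : Jmat R n = -J (Fin n) R := by simp [Jmat, J, fromBlocks_neg]
  rw [SymplecticGroup.mem_iff', IsSymplectic, hJ, Matrix.mul_neg, Matrix.neg_mul, neg_inj]

theorem fromBlocks_eq_symplecticDiag_mul {A B C D : Matrix (Fin n) (Fin n) R}
    (h : fromBlocks A B C D ∈ symplecticGroup (Fin n) R) (hA : IsUnit A.det) :
    fromBlocks A B C D =
      symplecticDiag A * fromBlocks 1 0 (Aᵀ * C) 1 * fromBlocks 1 (A⁻¹ * B) 0 1 := by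
  obtain ⟨hAC, -, hAD⟩ := SymplecticGroup.fromBlocks_mem_iff.mp h
  have hAAinv : A⁻¹ᵀ * Aᵀ = 1 := by
    rw [← transpose_mul, mul_nonsing_inv A hA, transpose_one]
  have hD : Aᵀ * C * (A⁻¹ * B) + 1 = Aᵀ * D := by
    rw [hAC, Matrix.mul_assoc, ← Matrix.mul_assoc A, mul_nonsing_inv A hA, Matrix.one_mul,
      ← hAD, add_sub_cancel]
  simp only [symplecticDiag, fromBlocks_multiply, fromBlocks_inj, Matrix.mul_one, Matrix.mul_zero,
    Matrix.zero_mul, add_zero, zero_add, true_and]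
  refine ⟨?_, ?_, ?_⟩
  · rw [← Matrix.mul_assoc, mul_nonsing_inv A hA, Matrix.one_mul]
  · rw [← Matrix.mul_assoc, hAAinv, Matrix.one_mul]
  · calc D = A⁻¹ᵀ * (Aᵀ * C * (A⁻¹ * B) + 1) := by
          rw [hD, ← Matrix.mul_assoc, hAAinv, Matrix.one_mul]
      _ = _ := by simp only [Matrix.mul_add, Matrix.mul_one, Matrix.mul_assoc]

theorem transpose_inv_mul_eq_of_fromBlocks_mem {A B C D : Matrix (Fin n) (Fin n) R}
    (h : fromBlocks A B C D ∈ symplecticGroup (Fin n) R) (hA : IsUnit A.det) :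
    (A⁻¹ * B)ᵀ = A⁻¹ * B := by
  have hT := SymplecticGroup.transpose_mem h
  rw [fromBlocks_transpose] at hT
  obtain ⟨hAB, -, -⟩ := SymplecticGroup.fromBlocks_mem_iff.mp hT
  rw [transpose_transpose, transpose_transpose] at hAB
  calc (A⁻¹ * B)ᵀ = A⁻¹ * (A * Bᵀ) * A⁻¹ᵀ := by
        rw [transpose_mul, ← Matrix.mul_assoc, nonsing_inv_mul A hA, Matrix.one_mul]
    _ = A⁻¹ * B := by
        rw [hAB, Matrix.mul_assoc, Matrix.mul_assoc, ← transpose_mul, nonsing_inv_mul A hA,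
          transpose_one, Matrix.mul_one]

theorem IsSymplectic.isElemSympProd_add_two {M : Matrix (Idx n) (Idx n) R} {N : ℕ}
    (hM : IsSymplectic M) (hA : IsUnit M.toBlocks₁₁.det)
    (hdiag : IsElemSympProd N (symplecticDiag M.toBlocks₁₁)) : IsElemSympProd (N + 2) M := by
  obtain ⟨A, B, C, D, rfl⟩ : ∃ A B C D, M = fromBlocks A B C D :=
    ⟨_, _, _, _, (fromBlocks_toBlocks M).symm⟩
  rw [toBlocks_fromBlocks₁₁] at hA hdiag
  rw [isSymplectic_iff_mem_symplecticGroup] at hM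
  obtain ⟨hAC, -, -⟩ := SymplecticGroup.fromBlocks_mem_iff.mp hM
  rw [fromBlocks_eq_symplecticDiag_mul hM hA]
  refine (hdiag.mul (isElemSympProd_fromBlocks_zero_one ?_)).mul
    (isElemSympProd_fromBlocks_one_zero (transpose_inv_mul_eq_of_fromBlocks_mem hM hA))
  rw [transpose_mul, transpose_transpose, hAC]

end Symplectic

section Elimination

variable {K : Type*} [Field K] (A : Matrix (Fin n) (Fin n) K) (k : Fin n)

def elimMultipliers : Fin n → K := fun i => if i = k then 0 else A i k / A k k

def rowElim : Matrix (Fin n) (Fin n) K := A - vecMulVec (elimMultipliers A k) (A k)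

@[simp]
theorem elimMultipliers_self : elimMultipliers A k k = 0 := if_pos rfl

theorem one_add_vecMulVec_elimMultipliers_mul_rowElim :
    (1 + vecMulVec (elimMultipliers A k) (Pi.single k 1)) * rowElim A k = A := by
  have hW : vecMulVec (elimMultipliers A k) (Pi.single k 1) * A =
      vecMulVec (elimMultipliers A k) (A k) := by
    ext i j
    simp [mul_apply, vecMulVec_apply, Pi.single_apply]
  have hW2 : vecMulVec (elimMultipliers A k) (Pi.single k 1) *
      vecMulVec (elimMultipliers A k) (A k) = 0 := by
    simp [vecMulVec_mul_vecMulVec, single_dotProduct]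
  rw [rowElim, Matrix.mul_sub, Matrix.add_mul, Matrix.add_mul, hW, hW2, Matrix.one_mul,
    Matrix.one_mul]
  abel

theorem det_rowElim : (rowElim A k).det = A.det := by
  conv_rhs => rw [← one_add_vecMulVec_elimMultipliers_mul_rowElim A k]
  rw [det_mul, vecMulVec_eq Unit, det_one_add_replicateCol_mul_replicateRow, single_dotProduct]
  simp

variable {A k}

theorem rowElim_apply_of_ne (hk : A k k ≠ 0) {i : Fin n} (hi : i ≠ k) : rowElim A k i k = 0 := by
  simp [rowElim, elimMultipliers, vecMulVec_apply, hi, div_mul_cancel₀ _ hk]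

theorem rowElim_apply_of_eq_zero {j : Fin n} (h : A k j = 0) (i : Fin n) :
    rowElim A k i j = A i j := by
  simp [rowElim, vecMulVec_apply, h]

end Elimination

attribute [local instance] Matrix.normedAddCommGroup

section NearIdentity

variable {𝕜 : Type*} [NormedField 𝕜] {A : Matrix (Fin n) (Fin n) 𝕜} {δ : ℝ}

theorem norm_apply_sub_one_apply_le (hA : ‖A - 1‖ ≤ δ) (i j : Fin n) :
    ‖A i j - (1 : Matrix (Fin n) (Fin n) 𝕜) i j‖ ≤ δ :=
  (norm_entry_le_entrywise_sup_norm (A - 1)).trans hA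

theorem norm_apply_le_of_ne (hA : ‖A - 1‖ ≤ δ) {i j : Fin n} (h : i ≠ j) : ‖A i j‖ ≤ δ := by
  simpa [one_apply_ne h] using norm_apply_sub_one_apply_le hA i j

theorem norm_apply_le (hA : ‖A - 1‖ ≤ δ) (i j : Fin n) : ‖A i j‖ ≤ 1 + δ := by
  have h1 : ‖(1 : Matrix (Fin n) (Fin n) 𝕜) i j‖ ≤ 1 := by
    rw [one_apply]; split_ifs <;> simp
  calc ‖A i j‖ = ‖(A i j - (1 : Matrix (Fin n) (Fin n) 𝕜) i j) + (1 : Matrix _ _ 𝕜) i j‖ := by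
        rw [sub_add_cancel]
    _ ≤ 1 + δ := by linarith [norm_add_le_of_le (norm_apply_sub_one_apply_le hA i j) h1]

theorem one_sub_le_norm_apply_self (hA : ‖A - 1‖ ≤ δ) (i : Fin n) : 1 - δ ≤ ‖A i i‖ := by
  have := norm_apply_sub_one_apply_le hA i i
  rw [one_apply_eq, norm_sub_rev] at this
  linarith [norm_sub_norm_le (1 : 𝕜) (A i i), norm_one (α := 𝕜)]

theorem norm_rowElim_sub_one_le (hA : ‖A - 1‖ ≤ δ) (hδ : δ ≤ 1 / 2) (k : Fin n) :
    ‖rowElim A k - 1‖ ≤ 4 * δ := by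
  have hδ0 : 0 ≤ δ := (norm_nonneg _).trans hA
  rw [Matrix.norm_le_iff (by positivity)]
  intro i j
  have hij := norm_apply_sub_one_apply_le hA i j
  rcases eq_or_ne i k with rfl | hik
  · simpa [rowElim, vecMulVec_apply] using hij.trans (by linarith)
  have hc : ‖elimMultipliers A k i‖ ≤ 2 * δ := by
    have hpiv : 1 / 2 ≤ ‖A k k‖ := by linarith [one_sub_le_norm_apply_self hA k]
    rw [elimMultipliers, if_neg hik, norm_div, div_le_iff₀ (by linarith)]
    nlinarith [norm_apply_le_of_ne hA hik]
  calc ‖rowElim A k i j - (1 : Matrix (Fin n) (Fin n) 𝕜) i j‖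
      = ‖(A i j - (1 : Matrix (Fin n) (Fin n) 𝕜) i j) - elimMultipliers A k i * A k j‖ := by
        congr 1; simp only [rowElim, Matrix.sub_apply, vecMulVec_apply]; ring
    _ ≤ δ + 2 * δ * (1 + δ) := by
        grw [norm_sub_le, norm_mul, hij, hc, norm_apply_le hA k j]
    _ ≤ 4 * δ := by nlinarith

theorem exists_symplecticDiag_eq_mul (l : List (Fin n)) {A : Matrix (Fin n) (Fin n) 𝕜} {δ : ℝ}
    (hA : ‖A - 1‖ ≤ δ) (hδ : 4 ^ l.length * δ ≤ 1 / 2) :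
    ∃ P A', IsElemSympProd (4 * l.length) P ∧ symplecticDiag A = P * symplecticDiag A' ∧
      A'.det = A.det ∧ ‖A' - 1‖ ≤ 4 ^ l.length * δ ∧ ∀ j ∈ l, ∀ i ≠ j, A' i j = 0 := by
  induction l with
  | nil => exact ⟨1, A, isElemSympProd_one, by simp, rfl, by simpa using hA, by simp⟩
  | cons k t ih =>
    have hδ0 : 0 ≤ δ := (norm_nonneg _).trans hA
    have h4t : 4 ^ t.length * δ ≤ 1 / 8 := by
      rw [List.length_cons, pow_succ] at hδ; linarith
    obtain ⟨P, A', hP, hPA, hdet, hnorm, hclean⟩ := ih (by linarith)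
    have hpiv : A' k k ≠ 0 := by
      have := one_sub_le_norm_apply_self hnorm k
      exact norm_pos_iff.mp (by linarith)
    refine ⟨P * symplecticDiag (1 + vecMulVec (elimMultipliers A' k) (Pi.single k 1)),
      rowElim A' k, ?_, ?_, by rw [det_rowElim, hdet], ?_, ?_⟩
    · simpa [mul_add] using hP.mul (isElemSympProd_symplecticDiag_one_add_vecMulVec
        (elimMultipliers_self A' k))
    · rw [hPA, Matrix.mul_assoc, ← symplecticDiag_mul,
        one_add_vecMulVec_elimMultipliers_mul_rowElim]
    · calc ‖rowElim A' k - 1‖ ≤ 4 * (4 ^ t.length * δ) :=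
            norm_rowElim_sub_one_le hnorm (by linarith) k
        _ = 4 ^ (k :: t).length * δ := by rw [List.length_cons, pow_succ]; ring
    · intro j hj i hij
      by_cases hjk : j = k
      · subst hjk; exact rowElim_apply_of_ne hpiv hij
      · have hj' : j ∈ t := (List.mem_cons.mp hj).resolve_left hjk
        rw [rowElim_apply_of_eq_zero (hclean j hj' k (Ne.symm hjk)), hclean j hj' i hij]

theorem isUnit_det_and_isElemSympProd_symplecticDiag {A : Matrix (Fin n) (Fin n) 𝕜} {δ : ℝ}
    (hA : ‖A - 1‖ ≤ δ) (hδ : 4 ^ n * δ ≤ 1 / 2) :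
    IsUnit A.det ∧ IsElemSympProd (4 * n + 4) (symplecticDiag A) := by
  obtain ⟨P, A', hP, hPA, hdet, hnorm, hclean⟩ :=
    exists_symplecticDiag_eq_mul (List.finRange n) hA (by rwa [List.length_finRange])
  rw [List.length_finRange] at hP hnorm
  have hdiag : A' = diagonal fun i => A' i i := by
    ext i j
    rcases eq_or_ne i j with rfl | hij
    · simp
    · simp [hclean j (List.mem_finRange j) i hij, hij]
  have hne : ∀ i, A' i i ≠ 0 := fun i =>
    norm_pos_iff.mp (by linarith [one_sub_le_norm_apply_self hnorm i])
  have hA' : IsUnit A'.det := by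
    rw [hdiag, det_diagonal]
    exact (Finset.prod_ne_zero_iff.mpr fun i _ => hne i).isUnit
  refine ⟨hdet ▸ hA', ?_⟩
  rw [hPA]
  refine hP.mul (isElemSympProd_symplecticDiag_of_symm ?_ hA')
  rw [hdiag, diagonal_transpose]

theorem IsSymplectic.isElemSympProd_of_norm_toBlocks₁₁_sub_one_le
    {M : Matrix (Idx n) (Idx n) 𝕜} {δ : ℝ} (hM : IsSymplectic M)
    (hA : ‖M.toBlocks₁₁ - 1‖ ≤ δ) (hδ : 4 ^ n * δ ≤ 1 / 2) : IsElemSympProd (4 * n + 6) M :=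
  have h := isUnit_det_and_isElemSympProd_symplecticDiag hA hδ
  hM.isElemSympProd_add_two h.1 h.2

end NearIdentity

/-- Every complex symplectic matrix whose entries are close enough to those of the identity
is a product of at most `N(n)` elementary symplectic matrices. -/
theorem stmt11 (n : ℕ) :
    ∃ (N : ℕ) (ε : ℝ), 0 < ε ∧
      ∀ M : Matrix (Idx n) (Idx n) ℂ, IsSymplectic M →
        (∀ a b : Idx n, ‖M a b - (1 : Matrix (Idx n) (Idx n) ℂ) a b‖ < ε) →
        ∃ L : List (Matrix (Idx n) (Idx n) ℂ),
          L.length ≤ N ∧ (∀ E ∈ L, IsElemSymp E) ∧ M = L.prod := by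
  refine ⟨4 * n + 6, 1 / (2 * 4 ^ n), by positivity, fun M hM hnear => ?_⟩
  have hA : ‖M.toBlocks₁₁ - 1‖ ≤ 1 / (2 * 4 ^ n) :=
    (Matrix.norm_le_iff (by positivity)).2 fun i j => by
      simpa [toBlocks₁₁, one_apply] using (hnear (.inl i) (.inl j)).le
  exact hM.isElemSympProd_of_norm_toBlocks₁₁_sub_one_le hA (le_of_eq (by field_simp))
end

section
/- If X is a compact (or more generally finite dimensional normal) topological space and M: X → Sp(n) is null-homotopic, then for every ε > 0 there exist finitely many continuous maps N₁,...,N_k: X → Sp(n) with M(x) = N₁(x)···N_k(x) and ‖I - N_j(x)‖ < ε for all x ∈ X and all j. -/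
open Matrix

/-!
A homotopy `γ` from `M` to the identity is continuous on the compact space `[0, 1] × X`, hence
uniformly continuous in `t` as a map into `C(X, Sp(n))`. For a fine subdivision
`0 = t₀ < ⋯ < t_k = 1` the quotients `γ(t_j) γ(t_{j+1})⁻¹` are therefore uniformly close to the
identity, and their product telescopes to `γ(0) γ(1)⁻¹ = M`. Only the topological group structure
of `Sp(n)` enters.
-/

open Filter Topology Uniformity unitInterval

theorem List.prod_ofFn_div_succ {G : Type*} [Group G] (k : ℕ) (f : ℕ → G) :
    (List.ofFn fun j : Fin k => f j / f (j + 1)).prod = f 0 / f k := by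
  rw [← List.prod_range_div']
  congr 1
  apply List.ext_getElem <;> simp

/-- Uniform continuity of `t ↦ γ(t, ·)` into `C(X, G)`, where `G` carries its right uniformity
and `C(X, G)` the uniformity of uniform convergence. -/
theorem exists_forall_dist_lt_div_mem {T X G : Type*} [PseudoMetricSpace T] [CompactSpace T]
    [TopologicalSpace X] [CompactSpace X] [TopologicalSpace G] [Group G] [IsTopologicalGroup G]
    (γ : C(T × X, G)) {U : Set G} (hU : U ∈ 𝓝 1) :
    ∃ δ > 0, ∀ s t : T, dist s t < δ → ∀ x, γ (s, x) / γ (t, x) ∈ U := by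
  let := IsTopologicalGroup.rightUniformSpace G
  have hV : {p : G × G | p.2 * p.1⁻¹ ∈ U} ∈ 𝓤 G := preimage_mem_comap hU
  have hW := (ContinuousMap.hasBasis_compactConvergenceUniformity_of_compact (α := X)).mem_of_mem hV
  obtain ⟨δ, hδ, hdist⟩ := Metric.mem_uniformity_dist.mp
    (CompactSpace.uniformContinuous_of_continuous γ.curry.continuous hW)
  exact ⟨δ, hδ, fun s t hst x => div_eq_mul_inv (γ (s, x)) _ ▸ hdist (dist_comm s t ▸ hst) x⟩

theorem exists_list_prod_eq_div_of_mem_nhds_one {X G : Type*} [TopologicalSpace X]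
    [CompactSpace X] [TopologicalSpace G] [Group G] [IsTopologicalGroup G] (γ : C(I × X, G))
    {U : Set G} (hU : U ∈ 𝓝 1) :
    ∃ (k : ℕ) (N : Fin k → C(X, G)), (∀ j x, N j x ∈ U) ∧
      ∀ x, γ (0, x) / γ (1, x) = (List.ofFn fun j => N j x).prod := by
  obtain ⟨δ, hδ, hγ⟩ := exists_forall_dist_lt_div_mem γ hU
  let p : ℕ → I := Set.Icc.addNSMul (zero_le_one' ℝ) (δ / 2)
  have hp : ∀ j : ℕ, dist (p j) (p (j + 1)) < δ := fun j =>
    calc dist (p j) (p (j + 1)) ≤ |(0 + j • (δ / 2)) - (0 + (j + 1) • (δ / 2))| :=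
          Set.abs_projIcc_sub_projIcc _
      _ = δ / 2 := by
          rw [zero_add, zero_add, succ_nsmul, sub_add_cancel_left, abs_neg,
            abs_of_pos (half_pos hδ)]
      _ < δ := half_lt_self hδ
  obtain ⟨k, hk⟩ := Set.Icc.addNSMul_eq_right (zero_le_one' ℝ) (half_pos hδ)
  refine ⟨k, fun j => γ.curry (p j) / γ.curry (p (j + 1)), fun j x => hγ _ _ (hp j) x, fun x => ?_⟩
  have hp0 : p 0 = 0 := Subtype.ext (Set.Icc.addNSMul_zero (zero_le_one' ℝ))
  have hpk : p k = 1 := Subtype.ext (hk k le_rfl)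
  simpa [hp0, hpk] using (List.prod_ofFn_div_succ k fun j => γ (p j, x)).symm

section Symplectic

variable {R : Type*} [CommRing R] {n : ℕ}

theorem IsSymplectic.one : IsSymplectic (1 : Matrix (Idx n) (Idx n) R) := by
  simp [IsSymplectic]

theorem IsSymplectic.mul {A B : Matrix (Idx n) (Idx n) R} (hA : IsSymplectic A)
    (hB : IsSymplectic B) : IsSymplectic (A * B) := by
  calc (A * B)ᵀ * Jmat R n * (A * B) = Bᵀ * (Aᵀ * Jmat R n * A) * B := by
        simp only [transpose_mul, mul_assoc]
    _ = Jmat R n := by rw [hA, hB]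

theorem IsSymplectic.star_of_mem_unitaryGroup [StarRing R] {A : Matrix (Idx n) (Idx n) R}
    (hA : IsSymplectic A) (hU : A ∈ unitaryGroup (Idx n) R) : IsSymplectic (star A) := by
  have h : (star A)ᵀ * Aᵀ = 1 := by
    rw [← transpose_mul, Unitary.mul_star_self_of_mem hU, transpose_one]
  calc (star A)ᵀ * Jmat R n * star A = (star A)ᵀ * (Aᵀ * Jmat R n * A) * star A := by rw [hA]
    _ = ((star A)ᵀ * Aᵀ) * Jmat R n * (A * star A) := by simp only [mul_assoc]
    _ = Jmat R n := by rw [h, Unitary.mul_star_self_of_mem hU, one_mul, mul_one]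

variable (R n) in
def unitarySymplecticGroup [StarRing R] : Subgroup (unitaryGroup (Idx n) R) where
  carrier := {U | IsSymplectic (U : Matrix (Idx n) (Idx n) R)}
  one_mem' := IsSymplectic.one
  mul_mem' := IsSymplectic.mul
  inv_mem' {U} hU := by
    change IsSymplectic ((U⁻¹ : unitaryGroup (Idx n) R) : Matrix (Idx n) (Idx n) R)
    rw [UnitaryGroup.inv_val]
    exact hU.star_of_mem_unitaryGroup U.2

end Symplectic

theorem Matrix.setOf_forall_norm_sub_lt_mem_nhds {m l 𝕜 : Type*} [Finite m] [Finite l]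
    [SeminormedAddCommGroup 𝕜] (B : Matrix m l 𝕜) {ε : ℝ} (hε : 0 < ε) :
    {A : Matrix m l 𝕜 | ∀ a b, ‖B a b - A a b‖ < ε} ∈ 𝓝 B := by
  refine eventually_all.2 fun a => eventually_all.2 fun b => ?_
  have hcont : Continuous fun A : Matrix m l 𝕜 => ‖B a b - A a b‖ := by fun_prop
  exact hcont.continuousAt.eventually_lt continuousAt_const (by simpa using hε)

theorem stmt15_general {X : Type*} [TopologicalSpace X] [CompactSpace X] {n : ℕ}
    (M : X → Matrix (Idx n) (Idx n) ℂ)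
    (hhom : ∃ H : ℝ → X → Matrix (Idx n) (Idx n) ℂ,
      Continuous (fun p : ℝ × X => H p.1 p.2) ∧
      (∀ t ∈ Set.Icc (0 : ℝ) 1, ∀ x,
        IsSymplectic (H t x) ∧ H t x ∈ Matrix.unitaryGroup (Idx n) ℂ) ∧
      (∀ x, H 0 x = 1) ∧ H 1 = M) :
    ∀ ε : ℝ, 0 < ε →
      ∃ (k : ℕ) (N : Fin k → X → Matrix (Idx n) (Idx n) ℂ),
        (∀ j, Continuous (N j)) ∧
        (∀ j x, IsSymplectic (N j x) ∧ N j x ∈ Matrix.unitaryGroup (Idx n) ℂ) ∧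
        (∀ x, M x = (List.ofFn fun j => N j x).prod) ∧
        ∀ (j : Fin k) (x : X) (a b : Idx n),
          ‖(1 : Matrix (Idx n) (Idx n) ℂ) a b - N j x a b‖ < ε := by
  obtain ⟨H, hHc, hHsp, hH0, hH1⟩ := hhom
  intro ε hε
  let toMatrix : unitarySymplecticGroup ℂ n →* Matrix (Idx n) (Idx n) ℂ :=
    (unitaryGroup (Idx n) ℂ).subtype.comp (unitarySymplecticGroup ℂ n).subtype
  have hcont : Continuous toMatrix := continuous_subtype_val.comp continuous_subtype_val
  let γ : C(I × X, unitarySymplecticGroup ℂ n) :=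
    ⟨fun p => ⟨⟨H (σ p.1) p.2, (hHsp _ (σ p.1).2 _).2⟩, (hHsp _ (σ p.1).2 _).1⟩, by fun_prop⟩
  obtain ⟨k, N, hN, hprod⟩ := exists_list_prod_eq_div_of_mem_nhds_one γ
    (hcont.tendsto' 1 1 (map_one toMatrix) (setOf_forall_norm_sub_lt_mem_nhds 1 hε))
  refine ⟨k, fun j => toMatrix ∘ N j, fun j => hcont.comp (N j).continuous,
    fun j x => ⟨(N j x).2, (N j x).1.2⟩, fun x => ?_, fun j x => hN j x⟩
  have hγ1 : γ (1, x) = 1 := Subtype.ext (Subtype.ext (by simp [γ, hH0]))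
  have hx := hprod x
  rw [hγ1, div_one] at hx
  simpa [γ, toMatrix, hH1, Function.comp_def] using congrArg toMatrix hx

/-- If `X` is compact and `M : X → Sp(n)` is null-homotopic, then for every `ε > 0`
one can write `M` as a finite product of continuous maps into `Sp(n)` all of whose
values are `ε`-close to the identity. -/
theorem stmt15 {X : Type*} [TopologicalSpace X] [CompactSpace X] {n : ℕ}
    (M : X → Matrix (Idx n) (Idx n) ℂ) (hMc : Continuous M)
    (hMsp : ∀ x, IsSymplectic (M x) ∧ M x ∈ Matrix.unitaryGroup (Idx n) ℂ)
    (hhom : ∃ H : ℝ → X → Matrix (Idx n) (Idx n) ℂ,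
      Continuous (fun p : ℝ × X => H p.1 p.2) ∧
      (∀ t ∈ Set.Icc (0 : ℝ) 1, ∀ x,
        IsSymplectic (H t x) ∧ H t x ∈ Matrix.unitaryGroup (Idx n) ℂ) ∧
      (∀ x, H 0 x = 1) ∧ H 1 = M) :
    ∀ ε : ℝ, 0 < ε →
      ∃ (k : ℕ) (N : Fin k → X → Matrix (Idx n) (Idx n) ℂ),
        (∀ j, Continuous (N j)) ∧
        (∀ j x, IsSymplectic (N j x) ∧ N j x ∈ Matrix.unitaryGroup (Idx n) ℂ) ∧
        (∀ x, M x = (List.ofFn fun j => N j x).prod) ∧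
        ∀ (j : Fin k) (x : X) (a b : Idx n),
          ‖(1 : Matrix (Idx n) (Idx n) ℂ) a b - N j x a b‖ < ε :=
  stmt15_general M hhom
end

section
/- If R has Bass stable rank 1 and M ∈ Sp_{2n}(R), then M can be multiplied on the left by finitely many elementary symplectic matrices and matrices of the form K_{ij}(a) so that the resulting matrix has invertible entry in position (1,1). -/
/-!
A symplectic `M` is invertible, with left inverse `-J Mᵀ J`, so its first column `v` is
unimodular: `w ⬝ᵥ v = 1`. Stable rank one applied to `(v₁, 1 - w₁ v₁)` gives `y` such that the
row `g = y w + (1 - y w₁) e₁` has `g₁ = 1` and `g ⬝ᵥ v = v₁ + y (1 - w₁ v₁)` a unit. Every row `g`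
with `g₁ = 1` is the first row of `K₁₂(g₂) ⋯ K₁ₙ(gₙ) · E_S`: the `K`'s turn `e₁` into
`a = (g₁, …, gₙ)`, and `E_S` then contributes `a S` to the second half, where the symmetric
`S = e₁ uᵀ + u e₁ᵀ - (a ⬝ᵥ u) e₁ e₁ᵀ` satisfies `a S = u` for any `u` because `a₁ = 1`.
-/

open Matrix

def HasStableRankOne (R : Type*) [CommRing R] : Prop :=
  ∀ x₁ x₂ : R, (∃ r s : R, r * x₁ + s * x₂ = 1) → ∃ y : R, IsUnit (x₁ + y * x₂)

section

variable {R : Type*} [CommRing R]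

theorem HasStableRankOne.exists_isUnit_dotProduct {ι : Type*} [Fintype ι] [DecidableEq ι]
    (hR : HasStableRankOne R) {v w : ι → R} (hwv : w ⬝ᵥ v = 1) (i₀ : ι) :
    ∃ g : ι → R, g i₀ = 1 ∧ IsUnit (g ⬝ᵥ v) := by
  obtain ⟨y, hy⟩ := hR (v i₀) (1 - w i₀ * v i₀) ⟨w i₀, 1, by ring⟩
  refine ⟨y • w + Pi.single i₀ (1 - y * w i₀), by simp, ?_⟩
  rw [add_dotProduct, smul_dotProduct, hwv, single_dotProduct]
  convert hy using 1
  simp only [smul_eq_mul]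
  ring

theorem exists_transpose_eq_self_vecMul_eq {ι : Type*} [Fintype ι] [DecidableEq ι]
    {a : ι → R} {i₀ : ι} (ha : a i₀ = 1) (u : ι → R) :
    ∃ S : Matrix ι ι R, Sᵀ = S ∧ a ᵥ* S = u := by
  set e : ι → R := Pi.single i₀ 1
  have hae : a ⬝ᵥ e = 1 := by simp [e, ha]
  refine ⟨vecMulVec e u + vecMulVec u e - (a ⬝ᵥ u) • vecMulVec e e, ?_, ?_⟩
  · simp only [transpose_sub, transpose_add, transpose_smul, transpose_vecMulVec]
    abel
  · simp only [vecMul_sub, vecMul_add, vecMul_smul, vecMul_vecMulVec, hae, one_smul]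
    abel

variable {n : ℕ}

theorem Jmat_mul_self : Jmat R n * Jmat R n = -1 := by
  rw [Jmat, fromBlocks_multiply, ← fromBlocks_one, fromBlocks_neg]
  simp

theorem IsSymplectic.exists_dotProduct_col_eq_one {M : Matrix (Idx n) (Idx n) R}
    (hM : IsSymplectic M) (j : Idx n) : ∃ w : Idx n → R, (w ⬝ᵥ fun k => M k j) = 1 := by
  have hinv : -(Jmat R n * Mᵀ * Jmat R n) * M = 1 := by
    rw [neg_mul, Matrix.mul_assoc, Matrix.mul_assoc, ← Matrix.mul_assoc Mᵀ, hM,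
      Jmat_mul_self, neg_neg]
  exact ⟨_, by rw [← mul_apply', hinv, one_apply_eq]⟩

theorem sumElim_vecMul_Kmat (i j : Fin n) (a : R) (x : Fin n → R) :
    (Sum.elim x 0 : Idx n → R) ᵥ* Kmat i j a =
      (Sum.elim (x + Pi.single j (x i * a)) 0 : Idx n → R) := by
  have hsingle : x ᵥ* single i j a = Pi.single j (x i * a) := by
    ext k
    simp [vecMul, dotProduct, single_apply, Pi.single_apply, ite_and, eq_comm]
  rw [Kmat, vecMul_fromBlocks]
  simp [vecMul_add, hsingle]

theorem sumElim_vecMul_prod_Kmat {i : Fin n} (c : Fin n → R) {l : List (Fin n)} (hil : i ∉ l)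
    {x : Fin n → R} (hx : x i = 1) :
    (Sum.elim x 0 : Idx n → R) ᵥ* (l.map fun j => Kmat i j (c j)).prod =
      Sum.elim (x + (l.map fun j => Pi.single j (c j)).sum) 0 := by
  induction l generalizing x with
  | nil => simp
  | cons j l ih =>
    obtain ⟨hij, hil⟩ := not_or.mp (List.mem_cons.not.mp hil)
    rw [List.map_cons, List.prod_cons, ← vecMul_vecMul, sumElim_vecMul_Kmat, hx, one_mul,
      ih hil, List.map_cons, List.sum_cons, add_assoc]
    simp [hx, hij]

theorem sumElim_single_vecMul_prod_Kmat {i : Fin n} {a : Fin n → R} (ha : a i = 1) :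
    (Sum.elim (Pi.single i 1) 0 : Idx n → R) ᵥ*
      ((Finset.univ.erase i).toList.map fun j => Kmat i j (a j)).prod = Sum.elim a 0 := by
  rw [sumElim_vecMul_prod_Kmat a (by simp) (by simp), Finset.sum_map_toList, ← ha,
    Finset.add_sum_erase _ (fun j => Pi.single j (a j)) (Finset.mem_univ i),
    Finset.univ_sum_single]

theorem exists_prod_row_eq {i : Fin n} {g : Idx n → R} (hg : g (Sum.inl i) = 1) :
    ∃ L : List (Matrix (Idx n) (Idx n) R),
      (∀ E ∈ L, IsElemSymp E ∨ ∃ (i j : Fin n) (a : R), i ≠ j ∧ E = Kmat i j a) ∧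
      L.prod (Sum.inl i) = g := by
  set a : Fin n → R := fun j => g (Sum.inl j)
  obtain ⟨S, hS, hSg⟩ := exists_transpose_eq_self_vecMul_eq (a := a) hg fun k => g (Sum.inr k)
  refine ⟨((Finset.univ.erase i).toList.map fun j => Kmat i j (a j)) ++ [fromBlocks 1 S 0 1],
    ?_, ?_⟩
  · simp only [List.mem_append, List.mem_map, Finset.mem_toList, Finset.mem_erase,
      List.mem_singleton]
    rintro E (⟨j, ⟨hji, -⟩, rfl⟩ | rfl)
    · exact .inr ⟨i, j, _, hji.symm, rfl⟩
    · exact .inl ⟨S, hS, .inl rfl⟩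
  · have hrow : (Pi.single (Sum.inl i) 1 : Idx n → R) = Sum.elim (Pi.single i 1) 0 := by
      ext (k | k) <;> simp [Pi.single_apply]
    rw [← row_apply' (List.prod _ : Matrix (Idx n) (Idx n) R), ← single_one_vecMul, hrow,
      List.prod_append, List.prod_singleton, ← vecMul_vecMul,
      sumElim_single_vecMul_prod_Kmat (a := a) hg, vecMul_fromBlocks]
    ext (k | k) <;> simp [a, hSg]

end

/-- Over a ring of Bass stable rank one, every symplectic matrix can be multiplied on the
left by finitely many elementary symplectic matrices and matrices `K_{ij}(a)` so that the
entry in position `(1,1)` becomes invertible. -/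
theorem stmt18 {R : Type*} [CommRing R] {n : ℕ} [NeZero n]
    (hbsr : ∀ x₁ x₂ : R, (∃ r s : R, r * x₁ + s * x₂ = 1) → ∃ y : R, IsUnit (x₁ + y * x₂))
    (M : Matrix (Idx n) (Idx n) R) (hM : IsSymplectic M) :
    ∃ L : List (Matrix (Idx n) (Idx n) R),
      (∀ E ∈ L, IsElemSymp E ∨ ∃ (i j : Fin n) (a : R), i ≠ j ∧ E = Kmat i j a) ∧
      IsUnit ((L.prod * M) (Sum.inl 0) (Sum.inl 0)) := by
  obtain ⟨w, hw⟩ := hM.exists_dotProduct_col_eq_one (Sum.inl 0)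
  obtain ⟨g, hg, hgu⟩ := HasStableRankOne.exists_isUnit_dotProduct hbsr hw (Sum.inl 0)
  obtain ⟨L, hL, hLg⟩ := exists_prod_row_eq hg
  exact ⟨L, hL, by rwa [mul_apply', hLg]⟩
end
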